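/- Let m be an integer, p a prime, and (U_e) the generalized Fibonacci sequence with parameter m. Suppose e ≥ 1 is the least positive integer (the entry point) such that p divides U_e. Then for every n ≥ 1: T_n(m)^e ≡ U_{e-1}^{n-1}·I_n (mod p). -/

import Mathlib

/-- The generalized Fibonacci sequence with parameter `m`:
`U_0 = 0`, `U_1 = 1`, `U_{e+1} = m U_e + U_{e-1}`. -/
def genFibU {R : Type*} [CommRing R] (m : R) : ℕ → R
  | 0 => 0
  | 1 => 1
  | e + 2 => m * genFibU m (e + 1) + genFibU m e

/-- The `n × n` generalized Fibonacci matrix `T_n(m)`, with 1-based `(i,j)` entry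
`m^{i+j-n-1} C(i-1, n-j)` when `i + j ≥ n + 1` and `0` otherwise. -/
def genFibMatrix {R : Type*} [CommRing R] (m : R) (n : ℕ) :
    Matrix (Fin n) (Fin n) R :=
  Matrix.of fun i j =>
    if n ≤ i.val + j.val + 1 then
      m ^ (i.val + j.val + 1 - n) * (Nat.choose i.val (n - 1 - j.val) : R)
    else 0

open MvPolynomial Finset

section Core
variable {R : Type*} [CommRing R]

lemma genFibU_rec (m : R) (e : ℕ) :
    genFibU m (e + 2) = m * genFibU m (e + 1) + genFibU m e := rfl

lemma genFibU_map {S : Type*} [CommRing S] (f : R →+* S) (m : R) :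
    ∀ e, f (genFibU m e) = genFibU (f m) e
  | 0 => by simp [genFibU]
  | 1 => by simp [genFibU]
  | (e+2) => by
    simp only [genFibU_rec, map_add, map_mul, genFibU_map f m (e+1), genFibU_map f m e]

/-- The entry of `genFibMatrix` as a function of natural numbers. -/
def Aent (a : R) (n i j : ℕ) : R :=
  if n ≤ i + j + 1 then a ^ (i + j + 1 - n) * (Nat.choose i (n - 1 - j) : R) else 0

lemma genFibMatrix_apply (a : R) (n : ℕ) (i j : Fin n) :
    genFibMatrix a n i j = Aent a n i.val j.val := rfl

noncomputable def sigmaAH (a : R) :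
    MvPolynomial (Fin 2) R →ₐ[R] MvPolynomial (Fin 2) R :=
  aeval ![C a * X 0 + X 1, X 0]

lemma sigmaAH_X0 (a : R) : sigmaAH a (X 0) = C a * X 0 + X 1 := by
  simp [sigmaAH]

lemma sigmaAH_X1 (a : R) : sigmaAH a (X 1) = X 0 := by
  simp [sigmaAH]

noncomputable def bmon (n i : ℕ) : MvPolynomial (Fin 2) R :=
  X 0 ^ i * X 1 ^ (n - 1 - i)

lemma bmon_eq_monomial (n j : ℕ) :
    (bmon n j : MvPolynomial (Fin 2) R) =
      monomial (Finsupp.single 0 j + Finsupp.single 1 (n - 1 - j)) 1 := by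
  rw [bmon, X_pow_eq_monomial, X_pow_eq_monomial, monomial_mul, one_mul]

lemma sigmaAH_bmon (a : R) (n : ℕ) (i : ℕ) (hi : i < n) :
    sigmaAH a (bmon n i) = ∑ j ∈ range n, C (Aent a n i j) * bmon n j := by
  have h1 : sigmaAH a (bmon n i) =
      ∑ k ∈ range (i+1), C (a ^ k * (Nat.choose i k : R)) * bmon n (k + (n-1-i)) := by
    rw [bmon, map_mul, map_pow, map_pow, sigmaAH_X0, sigmaAH_X1, add_pow, Finset.sum_mul]
    refine Finset.sum_congr rfl fun k hk => ?_
    have hk' : k ≤ i := Nat.lt_succ_iff.mp (Finset.mem_range.mp hk)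
    have e1 : n - 1 - (k + (n-1-i)) = i - k := by omega
    rw [bmon, e1, mul_pow, ← C_pow, (map_natCast (C : R →+* MvPolynomial (Fin 2) R)
      (Nat.choose i k)).symm, map_mul, pow_add]
    ring
  rw [h1]
  have h2 : ∑ j ∈ range n, C (Aent a n i j) * bmon n j
      = ∑ j ∈ Ico (n-1-i) n, C (Aent a n i j) * bmon n j := by
    refine (Finset.sum_subset (fun j hj => Finset.mem_range.mpr (Finset.mem_Ico.mp hj).2)
      fun j hj hj' => ?_).symm
    have : ¬ n ≤ i + j + 1 := by
      simp only [Finset.mem_range, Finset.mem_Ico, not_and, not_le] at hj hj' ⊢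
      omega
    rw [Aent, if_neg this, map_zero, zero_mul]
  rw [h2]
  refine Finset.sum_nbij' (fun k => k + (n-1-i)) (fun j => j - (n-1-i)) ?_ ?_ ?_ ?_ ?_
  · intro k hk
    have := Finset.mem_range.mp hk
    simp only [Finset.mem_Ico]; omega
  · intro j hj
    have := Finset.mem_Ico.mp hj
    simp only [Finset.mem_range]; omega
  · intro k hk; omega
  · intro j hj
    have := Finset.mem_Ico.mp hj
    omega
  · intro k hk
    have hk' : k ≤ i := Nat.lt_succ_iff.mp (Finset.mem_range.mp hk)
    have hcond : n ≤ i + (k + (n-1-i)) + 1 := by omega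
    rw [Aent, if_pos hcond]
    have e1 : i + (k + (n-1-i)) + 1 - n = k := by omega
    have e2 : n - 1 - (k + (n-1-i)) = i - k := by omega
    rw [e1, e2, Nat.choose_symm hk']

end Core

section Core2
variable {R : Type*} [CommRing R]

lemma pow_bmon (a : R) (n : ℕ) :
    ∀ e : ℕ, ∀ i : Fin n, (sigmaAH a ^ e) (bmon n i.val) =
      ∑ j : Fin n, C ((genFibMatrix a n ^ e) i j) * bmon n j.val
  | 0 => fun i => by
    simp only [pow_zero, Matrix.one_apply, AlgHom.one_apply]
    rw [Finset.sum_congr rfl (fun j _ => by rw [apply_ite C, map_one, map_zero, ite_mul,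
      one_mul, zero_mul])]
    simp
  | (e+1) => fun i => by
    rw [pow_succ', AlgHom.mul_apply, pow_bmon a n e i, map_sum]
    have step : ∀ j : Fin n, sigmaAH a (C ((genFibMatrix a n ^ e) i j) * bmon n j.val)
        = ∑ k : Fin n, C ((genFibMatrix a n ^ e) i j * genFibMatrix a n j k) * bmon n k.val := by
      intro j
      rw [map_mul]
      have hc : sigmaAH a (C ((genFibMatrix a n ^ e) i j)) = C ((genFibMatrix a n ^ e) i j) := by
        simp [sigmaAH]
      rw [hc, sigmaAH_bmon a n j.val j.isLt,
        ← Fin.sum_univ_eq_sum_range (fun j' => C (Aent a n j.val j') * bmon n j'),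
        Finset.mul_sum]
      exact Finset.sum_congr rfl fun k _ => by
        rw [genFibMatrix_apply, map_mul]; ring
    rw [Finset.sum_congr rfl fun j _ => step j, Finset.sum_comm]
    rw [pow_succ]
    refine Finset.sum_congr rfl fun k _ => ?_
    rw [Matrix.mul_apply, map_sum, Finset.sum_mul]

lemma pow_X01 (a : R) : ∀ e : ℕ,
    (sigmaAH a ^ (e+1)) (X 0) = C (genFibU a (e+2)) * X 0 + C (genFibU a (e+1)) * X 1 ∧
    (sigmaAH a ^ (e+1)) (X 1) = C (genFibU a (e+1)) * X 0 + C (genFibU a e) * X 1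
  | 0 => by
    constructor <;>
      simp [pow_one, sigmaAH_X0, sigmaAH_X1, genFibU, genFibU_rec]
  | (e+1) => by
    obtain ⟨h0, h1⟩ := pow_X01 a e
    have hc : ∀ c : R, sigmaAH a (C c) = C c := fun c => by simp [sigmaAH]
    constructor
    · rw [pow_succ', AlgHom.mul_apply, h0, map_add, map_mul, map_mul, hc, hc,
        sigmaAH_X0, sigmaAH_X1, genFibU_rec a (e+1), C_add, C_mul]
      ring
    · rw [pow_succ', AlgHom.mul_apply, h1, map_add, map_mul, map_mul, hc, hc,
        sigmaAH_X0, sigmaAH_X1, genFibU_rec a e, C_add, C_mul]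
      ring

end Core2

section Core3
variable {R : Type*} [CommRing R]

lemma core (a : R) (e n : ℕ) (he : 1 ≤ e) (hn : 1 ≤ n) (h0 : genFibU a e = 0) :
    genFibMatrix a n ^ e = genFibU a (e-1) ^ (n-1) • (1 : Matrix (Fin n) (Fin n) R) := by
  obtain ⟨e', rfl⟩ : ∃ e', e = e' + 1 := ⟨e - 1, by omega⟩
  set u := genFibU a e' with hu
  have hU2 : genFibU a (e'+2) = u := by
    rw [genFibU_rec, h0, mul_zero, zero_add]
  have hX0 : (sigmaAH a ^ (e'+1)) (X 0) = C u * X 0 := by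
    rw [(pow_X01 a e').1, h0, hU2, map_zero, zero_mul, add_zero]
  have hX1 : (sigmaAH a ^ (e'+1)) (X 1) = C u * X 1 := by
    rw [(pow_X01 a e').2, h0, map_zero, zero_mul, zero_add]
  have hb : ∀ i : Fin n, (sigmaAH a ^ (e'+1)) (bmon n i.val) = C (u^(n-1)) * bmon n i.val := by
    intro i
    have hsum : i.val + (n - 1 - i.val) = n - 1 := by omega
    simp only [bmon]
    rw [map_mul, map_pow, map_pow, hX0, hX1, mul_pow, mul_pow, ← C_pow, ← C_pow]
    have hC : (C (u ^ i.val) : MvPolynomial (Fin 2) R) * C (u ^ (n - 1 - i.val))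
        = C (u ^ (n - 1)) := by
      rw [← map_mul, ← pow_add, hsum]
    rw [← hC]
    ring
  have key : ∀ i : Fin n, ∑ j : Fin n, C ((genFibMatrix a n ^ (e'+1)) i j) * bmon n j.val
      = C (u^(n-1)) * bmon n i.val := fun i => by
    rw [← pow_bmon a n (e'+1) i, hb i]
  ext i k
  have hco := congrArg
    (coeff (Finsupp.single (0 : Fin 2) k.val + Finsupp.single 1 (n-1-k.val))) (key i)
  have hdval : ∀ j : Fin n,
      (Finsupp.single (0 : Fin 2) j.val + Finsupp.single 1 (n-1-j.val)
        = Finsupp.single (0 : Fin 2) k.val + Finsupp.single 1 (n-1-k.val)) ↔ j = k := by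
    intro j
    constructor
    · intro h
      have h0 := congrArg (fun f => f (0 : Fin 2)) h
      simp only [Finsupp.add_apply, Finsupp.single_eq_same,
        Finsupp.single_eq_of_ne' (show (1 : Fin 2) ≠ 0 by decide), add_zero] at h0
      exact Fin.ext h0
    · rintro rfl; rfl
  have hcoeff : ∀ (c : R) (j : Fin n),
      coeff (Finsupp.single (0 : Fin 2) k.val + Finsupp.single 1 (n-1-k.val))
        (C c * bmon n j.val) = if j = k then c else 0 := by
    intro c j
    rw [bmon_eq_monomial, coeff_C_mul, coeff_monomial]
    rw [if_congr (hdval j) rfl rfl]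
    split <;> simp
  rw [MvPolynomial.coeff_sum] at hco
  simp only [hcoeff] at hco
  rw [Finset.sum_ite_eq' Finset.univ k (fun j => (genFibMatrix a n ^ (e'+1)) i j)] at hco
  simp only [Finset.mem_univ, if_true] at hco
  simp only [Nat.add_sub_cancel]
  rw [Matrix.smul_apply, Matrix.one_apply, hco]
  split
  · next h => subst h; simp [hu]
  · next h => simp [Ne.symm h]

end Core3

/-- If `e ≥ 1` is the entry point of the prime `p` in the sequence `U` (the least
positive index with `p ∣ U_e`), then `T_n(m)^e ≡ U_{e-1}^{n-1} I_n (mod p)`. -/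
theorem genFibMatrix_pow_entryPoint (m : ℤ) (p : ℕ) (hp : p.Prime) (e : ℕ) (he : 1 ≤ e)
    (hdvd : (p : ℤ) ∣ genFibU m e)
    (hleast : ∀ e' : ℕ, 1 ≤ e' → e' < e → ¬ (p : ℤ) ∣ genFibU m e') :
    ∀ n : ℕ, 1 ≤ n →
      (((genFibMatrix m n) ^ e).map (Int.cast : ℤ → ZMod p)) =
        ((genFibU m (e - 1) : ZMod p)) ^ (n - 1) •
          (1 : Matrix (Fin n) (Fin n) (ZMod p)) := by
  intro n hn
  have hmapM : (genFibMatrix m n).map (Int.cast : ℤ → ZMod p)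
      = genFibMatrix ((m : ZMod p)) n := by
    ext i j
    simp only [Matrix.map_apply, genFibMatrix, Matrix.of_apply]
    split <;> push_cast <;> ring
  have hmappow : ((genFibMatrix m n) ^ e).map (Int.cast : ℤ → ZMod p)
      = (genFibMatrix ((m : ZMod p)) n) ^ e := by
    have := map_pow ((Int.castRingHom (ZMod p)).mapMatrix) (genFibMatrix m n) e
    simp only [RingHom.mapMatrix_apply] at this
    rw [show ((Int.castRingHom (ZMod p)) : ℤ → ZMod p) = (Int.cast : ℤ → ZMod p) from rfl]
      at this
    rw [this, hmapM]
  have h0 : genFibU ((m : ZMod p)) e = 0 := by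
    have h := genFibU_map (Int.castRingHom (ZMod p)) m e
    simp only [Int.coe_castRingHom] at h
    rw [← h]
    exact (ZMod.intCast_zmod_eq_zero_iff_dvd _ p).mpr hdvd
  rw [hmappow, core ((m : ZMod p)) e n he hn h0]
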